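/- Let n ∈ ℕ be odd and let x ∈ ℝ with 0 < x < 1. Then (1−x)·D_n(0) + x·D_n(1) − (1/(1+x))·D_n(0) − (x/(1+x))·D_n(x+1) ≥ 0. -/

import Mathlib

/-!
For `n = 1` the left-hand side is `x (1 - x) / (2 (1 + x))`. For odd `n = m + 2 ≥ 3`, unfolding
the recursion at `1`, `x + 1`, `x` and again at `1` expresses it as
`x² (1 - x) (D (m + 1) 2 - D (m - 1) 2) / (2 (1 + x) (2 - x))`.
This is nonnegative because `k ↦ D k j` increases in steps of two at every integer `j`: at
positive integers both `D (k + 1) j` and `D (k + 3) j` are the average of the neighbouring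
values, so this follows by induction from `D ≥ 0`.
-/

open Classical in
noncomputable def D : ℕ → ℝ → ℝ
  | 0, x => if x ≤ 0 then 1 else 0
  | n + 1, x =>
    if x ≤ 0 then 1
    else if ((n : ℝ) + 1) < x then 0
    else if ∃ m : ℤ, x = (m : ℝ) then
      (1 / 2) * D n (x - 1) + (1 / 2) * D n (x + 1)
    else if Odd n ∧ x < 1 then
      (1 - x) * D n 0 + x * D n 1
    else if Even (⌊x⌋ + (n : ℤ)) then
      (1 / (1 + Int.fract x)) * D n (⌊x⌋ : ℝ)
        + (Int.fract x / (1 + Int.fract x)) * D n (x + 1)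
    else
      ((1 - Int.fract x) / (2 - Int.fract x)) * D n (x - 1)
        + (1 / (2 - Int.fract x)) * D n (⌈x⌉ : ℝ)

lemma D_of_nonpos (n : ℕ) {x : ℝ} (h : x ≤ 0) : D n x = 1 := by
  cases n <;> simp [D, h]

lemma D_of_lt (n : ℕ) {x : ℝ} (h : (n : ℝ) < x) : D n x = 0 := by
  cases n with
  | zero => simp [D, not_le.mpr (by simpa using h)]
  | succ n =>
    push_cast at h
    rw [D, if_neg (by linarith), if_pos h]

lemma D_nonneg (n : ℕ) (x : ℝ) : 0 ≤ D n x := by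
  induction n generalizing x with
  | zero => rw [D]; split_ifs <;> norm_num
  | succ n ih =>
    have hf0 := Int.fract_nonneg x
    have hf1 := Int.fract_lt_one x
    rw [D]
    split_ifs with _ _ _ hodd
    · norm_num
    · norm_num
    · have := ih (x - 1); have := ih (x + 1)
      positivity
    · have := ih 0; have := ih 1
      nlinarith [hodd.2]
    · have := ih ⌊x⌋; have := ih (x + 1)
      positivity
    · have := ih (x - 1); have := ih ⌈x⌉
      have : 0 < 2 - Int.fract x := by linarith
      have : 0 ≤ 1 - Int.fract x := by linarith
      positivity

lemma D_succ_natCast {n k : ℕ} (hk : 0 < k) (hkn : k ≤ n + 1) :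
    D (n + 1) k = 1 / 2 * D n (k - 1) + 1 / 2 * D n (k + 1) := by
  have hk' : (0 : ℝ) < k := by exact_mod_cast hk
  have hkn' : (k : ℝ) ≤ n + 1 := by exact_mod_cast hkn
  rw [D, if_neg (not_le.mpr hk'), if_neg (not_lt.mpr hkn'), if_pos ⟨k, by simp⟩]

lemma D_succ_one (n : ℕ) : D (n + 1) 1 = 1 / 2 + 1 / 2 * D n 2 := by
  have h := D_succ_natCast (n := n) (k := 1) one_pos (by omega)
  norm_num at h
  rw [h, D_of_nonpos n le_rfl]
  ring

lemma D_natCast_le_D_add_two (m k : ℕ) : D m k ≤ D (m + 2) k := by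
  induction m generalizing k with
  | zero =>
    rcases k with _ | k
    · simp [D_of_nonpos]
    · rw [D_of_lt 0 (by push_cast; positivity)]
      exact D_nonneg _ _
  | succ m ih =>
    rcases k with _ | k
    · simp [D_of_nonpos]
    by_cases hk : k + 1 ≤ m + 1
    · rw [D_succ_natCast (by omega) hk, D_succ_natCast (n := m + 2) (by omega) (by omega)]
      have hl : ((k + 1 : ℕ) : ℝ) - 1 = (k : ℕ) := by push_cast; ring
      have hr : ((k + 1 : ℕ) : ℝ) + 1 = (k + 2 : ℕ) := by push_cast; ring
      rw [hl, hr]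
      linarith [ih k, ih (k + 2)]
    · rw [D_of_lt (m + 1) (by exact_mod_cast (by omega : m + 1 < k + 1))]
      exact D_nonneg _ _

lemma D_succ_of_odd {m : ℕ} (hm : Odd m) {x : ℝ} (hx0 : 0 < x) (hx1 : x < 1) :
    D (m + 1) x = (1 - x) * D m 0 + x * D m 1 := by
  have hx : ∀ j : ℤ, x ≠ j := fun j hj => by
    have : (0 : ℤ) < j := by exact_mod_cast hj ▸ hx0
    have : j < 1 := by exact_mod_cast hj ▸ hx1
    omega
  have hxm : x ≤ (m : ℝ) + 1 := by linarith [(m.cast_nonneg : (0 : ℝ) ≤ m)]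
  rw [D, if_neg (not_le.mpr hx0), if_neg (not_lt.mpr hxm),
    if_neg (fun ⟨j, hj⟩ => hx j hj), if_pos ⟨hm, hx1⟩]

lemma D_succ_add_one_of_even {m : ℕ} (hm : Even m) (hm1 : 1 ≤ m) {x : ℝ} (hx0 : 0 < x)
    (hx1 : x < 1) :
    D (m + 1) (x + 1) = (1 - x) / (2 - x) * D m x + 1 / (2 - x) * D m 2 := by
  have hm1' : (1 : ℝ) ≤ m := by exact_mod_cast hm1
  have hfloor : ⌊x + 1⌋ = 1 := by
    rw [Int.floor_add_one, Int.floor_eq_zero_iff.mpr ⟨hx0.le, hx1⟩, zero_add]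
  have hfract : Int.fract (x + 1) = x := by
    rw [Int.fract_add_one, Int.fract_eq_self.mpr ⟨hx0.le, hx1⟩]
  have hceil : ⌈x + 1⌉ = 2 := by
    have : ⌈x⌉ = 1 := Int.ceil_eq_iff.mpr ⟨by norm_num [hx0], by norm_num [hx1.le]⟩
    rw [Int.ceil_add_one, this]
    norm_num
  have hx : ∀ j : ℤ, x + 1 ≠ j := fun j hj => by
    have : (1 : ℤ) < j := by exact_mod_cast hj ▸ (by linarith : (1 : ℝ) < x + 1)
    have : j < 2 := by exact_mod_cast hj ▸ (by linarith : x + 1 < 2)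
    omega
  rw [D, if_neg (by linarith), if_neg (by linarith), if_neg (fun ⟨j, hj⟩ => hx j hj),
    if_neg (fun h => by linarith [h.2]), if_neg (by simp [hfloor, Int.even_add, hm]),
    hfract, hceil]
  ring_nf

lemma D_ineq_a_one {x : ℝ} (hx0 : 0 < x) (hx1 : x < 1) :
    (1 - x) * D 1 0 + x * D 1 1 - (1 / (1 + x)) * D 1 0 - (x / (1 + x)) * D 1 (x + 1) ≥ 0 := by
  have h1 : D 1 1 = 1 / 2 := by rw [D_succ_one, D_of_lt 0 (by norm_num)]; ring
  rw [D_of_nonpos 1 le_rfl, h1, D_of_lt 1 (by push_cast; linarith)]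
  have key : (1 - x) * 1 + x * (1 / 2) - 1 / (1 + x) * 1 - x / (1 + x) * 0
      = x * (1 - x) / (2 * (1 + x)) := by
    field_simp
    ring
  rw [key]
  exact div_nonneg (mul_nonneg hx0.le (by linarith)) (by linarith)

lemma D_ineq_a_two_mul_add_three (s : ℕ) {x : ℝ} (hx0 : 0 < x) (hx1 : x < 1) :
    (1 - x) * D (2 * s + 3) 0 + x * D (2 * s + 3) 1 - (1 / (1 + x)) * D (2 * s + 3) 0
      - (x / (1 + x)) * D (2 * s + 3) (x + 1) ≥ 0 := by
  have h2x : 0 < 2 - x := by linarith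
  set a := D (2 * s + 2) 2
  set b := D (2 * s) 2
  have hab : b ≤ a := by simpa using D_natCast_le_D_add_two (2 * s) 2
  have hD1 : D (2 * s + 3) 1 = 1 / 2 + 1 / 2 * a := D_succ_one _
  have hDx1 : D (2 * s + 3) (x + 1) = (1 - x) / (2 - x) * D (2 * s + 2) x + 1 / (2 - x) * a :=
    D_succ_add_one_of_even (by simp [parity_simps]) (by omega) hx0 hx1
  have hDx : D (2 * s + 2) x = 1 - x + x * (1 / 2 + 1 / 2 * b) := by
    rw [D_succ_of_odd (m := 2 * s + 1) (odd_two_mul_add_one s) hx0 hx1, D_succ_one,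
      D_of_nonpos _ le_rfl]
    ring
  rw [D_of_nonpos _ le_rfl, hD1, hDx1, hDx]
  have key : (1 - x) * 1 + x * (1 / 2 + 1 / 2 * a) - 1 / (1 + x) * 1
      - x / (1 + x) * ((1 - x) / (2 - x) * (1 - x + x * (1 / 2 + 1 / 2 * b)) + 1 / (2 - x) * a)
      = x ^ 2 * (1 - x) * (a - b) / (2 * (1 + x) * (2 - x)) := by
    field_simp
    ring
  rw [key]
  exact div_nonneg (mul_nonneg (mul_nonneg (sq_nonneg x) (by linarith)) (by linarith))
    (by positivity)

/-- part (a) of Lemma 3.3. -/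
theorem D_ineq_a (n : ℕ) (hn : Odd n) (x : ℝ) (hx0 : 0 < x) (hx1 : x < 1) :
    (1 - x) * D n 0 + x * D n 1 - (1 / (1 + x)) * D n 0 - (x / (1 + x)) * D n (x + 1) ≥ 0 := by
  obtain ⟨_ | s, rfl⟩ := hn
  · exact D_ineq_a_one hx0 hx1
  · exact D_ineq_a_two_mul_add_three s hx0 hx1
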